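/- arXiv:2202.05314 — 2 statements merged into one kernel-verified Lean document; each statement's English description precedes it below -/
import Mathlib

section
/- With X = F_{q^t}, A a (t−ℓ)-dimensional and V an ℓ-dimensional F_q-subspace with A ∩ V = {0}, and S = F_{q^t}^* × A, for any two distinct x, x′ ∈ X and any α ∈ A, the number of pairs s = (s₁, s₂) ∈ S with s₁x + s₂ ∈ α + V and s₁x′ + s₂ ∈ α + V equals q^ℓ − 1. -/
/-!
Since `A ⊕ V = K`, the conditions determine `s₂ ∈ A` uniquely from `s₁` (it is the `A`-component
of `α - s₁ x`), and given the first condition the second is equivalent to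
`s₁ (x - x') ∈ V`. So the pairs correspond to the units `s₁` with `s₁ (x - x') ∈ V`, that is,
via `s₁ ↦ s₁ (x - x')`, to the nonzero vectors of `V`, of which there are `q ^ ℓ - 1`.
-/

theorem Submodule.existsUnique_add_mem_of_isCompl {R E : Type*} [Ring R] [AddCommGroup E]
    [Module R E] {p q : Submodule R E} (h : IsCompl p q) (y : E) : ∃! a : p, y + a ∈ q := by
  obtain ⟨u, v, huv, huniq⟩ := p.existsUnique_add_of_isCompl h y
  refine ⟨-u, by simp [← huv], fun a ha => ?_⟩
  rw [← (huniq (-a) ⟨_, ha⟩ (by simp)).1, neg_neg]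

theorem Nat.card_subtype_prod_eq_of_existsUnique {ι α : Type*} {P : ι → α → Prop}
    {R : ι → Prop} (h : ∀ i, ∃! a, P i a) :
    Nat.card {s : ι × α // P s.1 s.2 ∧ R s.1} = Nat.card {i // R i} := by
  refine Nat.card_eq_of_bijective (fun s => (⟨s.1.1, s.2.2⟩ : {i // R i})) ⟨?_, fun i => ?_⟩
  · rintro ⟨⟨i, a⟩, ha, _⟩ ⟨⟨j, b⟩, hb, _⟩ hij
    obtain rfl : i = j := congrArg Subtype.val hij
    obtain rfl : a = b := (h i).unique ha hb
    rfl
  · obtain ⟨a, ha, -⟩ := h i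
    exact ⟨⟨(i, a), ha, i.2⟩, rfl⟩

theorem Nat.card_subtype_ne_eq_sub_one {α : Type*} [Finite α] (a : α) :
    Nat.card {x // x ≠ a} = Nat.card α - 1 := by
  have := Fintype.ofFinite α
  classical
  simp [Nat.card_eq_fintype_card, Fintype.card_subtype_compl]

theorem natCard_units_mul_mem {G₀ : Type*} [GroupWithZero G₀] {S : Set G₀} [Finite S]
    (hS : (0 : G₀) ∈ S) {d : G₀} (hd : d ≠ 0) :
    Nat.card {u : G₀ˣ // (u : G₀) * d ∈ S} = Nat.card S - 1 := by
  rw [← Nat.card_subtype_ne_eq_sub_one ⟨0, hS⟩]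
  refine Nat.card_congr
    { toFun u :=
        ⟨⟨u.1 * d, u.2⟩, fun h => mul_ne_zero u.1.ne_zero hd (congrArg Subtype.val h)⟩
      invFun y := ⟨Units.mk0 (y.1 / d) ?_, ?_⟩
      left_inv u := ?_
      right_inv y := ?_ }
  · exact div_ne_zero (fun h => y.2 (Subtype.ext h)) hd
  · simp [hd]
  · ext; simp [hd]
  · ext; simp [hd]

theorem pair_count_general {F K : Type*} [Field F] [Fintype F] [Field K] [Fintype K]
    [Algebra F K] (q t ℓ : ℕ)
    (hq : Fintype.card F = q) (ht : Module.finrank F K = t)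
    (hℓt : ℓ < t)
    (A V : Submodule F K)
    (hA : Module.finrank F A = t - ℓ) (hV : Module.finrank F V = ℓ)
    (hAV : A ⊓ V = ⊥)
    (x x' : K) (hxx' : x ≠ x') (α : K) :
    Nat.card {s : Kˣ × A //
        (s.1 : K) * x + (s.2 : K) - α ∈ V ∧ (s.1 : K) * x' + (s.2 : K) - α ∈ V}
      = q ^ ℓ - 1 := by
  have hAV : IsCompl A V :=
    (Submodule.isCompl_iff_disjoint A V (by rw [ht, hA, hV]; omega)).2 (disjoint_iff.2 hAV)
  have hfiber (u : Kˣ) : ∃! a : A, ((u : K) * x - α) + a ∈ V :=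
    Submodule.existsUnique_add_mem_of_isCompl hAV _
  calc _ = Nat.card {s : Kˣ × A //
          ((s.1 : K) * x - α) + s.2 ∈ V ∧ (s.1 : K) * (x - x') ∈ V} := by
        refine Nat.card_congr (Equiv.subtypeEquivRight fun s => ?_)
        rw [show (s.1 : K) * x' + s.2 - α = ((s.1 : K) * x - α + s.2) - s.1 * (x - x') by ring,
          add_sub_right_comm]
        exact and_congr_right (V.sub_mem_iff_right ·)
    _ = Nat.card {u : Kˣ // (u : K) * (x - x') ∈ V} :=
        Nat.card_subtype_prod_eq_of_existsUnique
          (R := fun u : Kˣ ↦ (u : K) * (x - x') ∈ V) hfiber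
    _ = Nat.card V - 1 := natCard_units_mul_mem V.zero_mem (sub_ne_zero.2 hxx')
    _ = q ^ ℓ - 1 := by
        rw [Module.natCard_eq_pow_finrank (K := F), Nat.card_eq_fintype_card, hq, hV]

/-- With `X = F_{q^t}` (modelled as `K`), `A` a `(t−ℓ)`-dimensional and
`V` an `ℓ`-dimensional `F_q`-subspace with `A ∩ V = {0}`, and `S = K* × A`, for any two
distinct `x, x' ∈ K` and any `α ∈ A`, the number of pairs `s = (s₁, s₂) ∈ S` with
`s₁ x + s₂ ∈ α + V` and `s₁ x' + s₂ ∈ α + V` equals `q^ℓ − 1`. -/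
theorem pair_count {F K : Type*} [Field F] [Fintype F] [Field K] [Fintype K]
    [Algebra F K] (q t ℓ : ℕ)
    (hq : Fintype.card F = q) (ht : Module.finrank F K = t)
    (hℓ : 1 ≤ ℓ) (hℓt : ℓ < t)
    (A V : Submodule F K)
    (hA : Module.finrank F A = t - ℓ) (hV : Module.finrank F V = ℓ)
    (hAV : A ⊓ V = ⊥)
    (x x' : K) (hxx' : x ≠ x') (α : K) (hα : α ∈ A) :
    Nat.card {s : Kˣ × A //
        (s.1 : K) * x + (s.2 : K) - α ∈ V ∧ (s.1 : K) * x' + (s.2 : K) - α ∈ V}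
      = q ^ ℓ - 1 :=
  pair_count_general q t ℓ hq ht hℓt A V hA hV hAV x x' hxx' α
end

section
/- With X = F_{q^t}, A, V, S as above, define f : S × X → A by f((s₁,s₂), x) = α iff s₁x + s₂ ∈ α + V (well-defined since X = A ⊕ V). Then for every fixed s ∈ S, the sets {x : f(s, x) = α}, α ∈ A, together over all s ∈ S form the blocks of a (v, k, λ)-BIBD on X with parameters v = q^t, b = q^{t−ℓ}(q^t − 1), r = q^t − 1, k = q^ℓ, λ = q^ℓ − 1; moreover f is the functional form of a mosaic of such BIBDs indexed by A. -/
/-!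
Since `A ⊓ V = ⊥` and `dim A + dim V = t`, the field splits as `K = A ⊕ V`; with `π : K → A` the
projection along `V`, `y + a - α ∈ V ↔ a = α - π y` for `a, α ∈ A`. So the block of `(s₁, s₂)`
indexed by `α` is the preimage of `V` under an invertible affine map (`k = |V|`); a point lies in
exactly one block for each `s₁ ∈ Kˣ` (`r = q^t - 1`); and two points `x ≠ x'` share the block of
`(s₁, s₂)` iff moreover `s₁ (x - x') ∈ V`, i.e. `s₁ ∈ (V \ {0}) / (x - x')` (`λ = q^ℓ - 1`).
-/

open Module Submodule

theorem Nat.card_subtype_mul_add_mem {K : Type*} [DivisionRing K] {u : K} (hu : u ≠ 0) (b : K)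
    (S : Set K) : Nat.card {x : K // u * x + b ∈ S} = Nat.card S :=
  Nat.card_congr <| ((Equiv.mulLeft₀ u hu).trans (Equiv.addRight b)).subtypeEquiv fun _ => Iff.rfl

theorem Nat.card_subtype_units_mul_mem {K : Type*} [GroupWithZero K] {S : Set K} (h0 : 0 ∈ S)
    {d : K} (hd : d ≠ 0) : Nat.card {u : Kˣ // (u : K) * d ∈ S} = Nat.card S - 1 := by
  set f : Kˣ → K := fun u => u * d
  have hf : Function.Injective f := fun u v h => Units.ext (mul_right_cancel₀ hd h)
  have hrange : S \ {0} ⊆ Set.range f := fun z hz =>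
    ⟨Units.mk0 (z * d⁻¹) (mul_ne_zero hz.2 (inv_ne_zero hd)), by simp [f, hd]⟩
  have hpre : f ⁻¹' (S \ {0}) = f ⁻¹' S := by
    ext u
    simp [f, hd]
  change (f ⁻¹' S).ncard = S.ncard - 1
  rw [← hpre, Set.ncard_preimage_of_injective_subset_range hf hrange,
    Set.ncard_sdiff_singleton_of_mem h0]

theorem Nat.card_subtype_and_snd_eq {U B : Type*} (P : U → Prop) (g : U → B) :
    Nat.card {p : U × B // P p.1 ∧ p.2 = g p.1} = Nat.card {u // P u} :=
  Nat.card_congr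
    { toFun p := ⟨p.1.1, p.2.1⟩
      invFun u := ⟨(u, g u), u.2, rfl⟩
      left_inv p := Subtype.ext (Prod.ext rfl p.2.2.symm)
      right_inv _ := rfl }

namespace Submodule

variable {R M : Type*} [Ring R] [AddCommGroup M] [Module R M] {A V : Submodule R M}

theorem add_sub_mem_iff_eq_sub_projectionOnto (h : IsCompl A V) (m : M) (a α : A) :
    m + a - α ∈ V ↔ a = α - A.projectionOnto V h m := by
  rw [← projectionOnto_apply_eq_zero_iff h, map_sub, map_add, projectionOnto_apply_left,
    projectionOnto_apply_left, eq_sub_iff_add_eq', sub_eq_zero]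

theorem add_sub_mem_and_add_sub_mem_iff (h : IsCompl A V) (m m' : M) (a α : A) :
    m + a - α ∈ V ∧ m' + a - α ∈ V ↔ m - m' ∈ V ∧ a = α - A.projectionOnto V h m := by
  rw [add_sub_mem_iff_eq_sub_projectionOnto h, add_sub_mem_iff_eq_sub_projectionOnto h,
    ← projectionOnto_apply_eq_zero_iff h, map_sub, sub_eq_zero]
  constructor
  · rintro ⟨rfl, h'⟩
    exact ⟨sub_right_injective h', rfl⟩
  · rintro ⟨h', rfl⟩
    exact ⟨rfl, by rw [h']⟩

end Submodule

theorem bibd_mosaic_from_field_general {F K : Type*} [Field F] [Fintype F] [Field K] [Fintype K]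
    [Algebra F K] (q t ℓ : ℕ)
    (hq : Fintype.card F = q) (ht : Module.finrank F K = t)
    (hℓt : ℓ < t)
    (A V : Submodule F K)
    (hA : Module.finrank F A = t - ℓ) (hV : Module.finrank F V = ℓ)
    (hAV : A ⊓ V = ⊥) :
    -- the number of points is v = q^t
    (Nat.card K = q ^ t) ∧
    -- the number of blocks (block indices) is b = q^{t-ℓ}(q^t - 1)
    (Nat.card (Kˣ × A) = q ^ (t - ℓ) * (q ^ t - 1)) ∧
    -- f is well defined: a mosaic indexed by A
    (∀ (s : Kˣ × A) (x : K), ∃! α : A, (s.1 : K) * x + (s.2 : K) - (α : K) ∈ V) ∧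
    -- every block has k = q^ℓ points
    (∀ (s : Kˣ × A) (α : A),
      Nat.card {x : K // (s.1 : K) * x + (s.2 : K) - (α : K) ∈ V} = q ^ ℓ) ∧
    -- replication number r = q^t - 1 in each member of the mosaic
    (∀ (α : A) (x : K),
      Nat.card {s : Kˣ × A // (s.1 : K) * x + (s.2 : K) - (α : K) ∈ V} = q ^ t - 1) ∧
    -- any two distinct points lie in λ = q^ℓ - 1 common blocks of each member
    (∀ (α : A) (x x' : K), x ≠ x' →
      Nat.card {s : Kˣ × A //
          (s.1 : K) * x + (s.2 : K) - (α : K) ∈ V ∧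
          (s.1 : K) * x' + (s.2 : K) - (α : K) ∈ V}
        = q ^ ℓ - 1) := by
  have hcompl : IsCompl A V :=
    (isCompl_iff_disjoint A V (by omega)).2 (disjoint_iff.2 hAV)
  have card_eq (W : Submodule F K) : Nat.card W = q ^ finrank F W := by
    rw [natCard_eq_pow_finrank (K := F), Nat.card_eq_fintype_card, hq]
  have cardK : Nat.card K = q ^ t := by
    rw [natCard_eq_pow_finrank (K := F), Nat.card_eq_fintype_card, hq, ht]
  have cardKx : Nat.card Kˣ = q ^ t - 1 := by rw [Nat.card_units, cardK]
  have cardV : Nat.card V = q ^ ℓ := by rw [card_eq, hV]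
  refine ⟨cardK, ?_, fun s x => ?_, fun s α => ?_, fun α x => ?_, fun α x x' hxx' => ?_⟩
  · rw [Nat.card_prod, cardKx, card_eq, hA, mul_comm]
  · simp_rw [add_sub_mem_iff_eq_sub_projectionOnto hcompl, eq_sub_iff_add_eq, eq_comm]
    exact existsUnique_eq
  · simp_rw [add_sub_assoc]
    exact (Nat.card_subtype_mul_add_mem s.1.ne_zero _ V).trans cardV
  · have hgraph := Nat.card_subtype_and_snd_eq (fun _ : Kˣ => True)
      fun u => α - A.projectionOnto V hcompl (u * x)
    simpa [add_sub_mem_iff_eq_sub_projectionOnto hcompl, cardKx] using hgraph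
  · simp_rw [add_sub_mem_and_add_sub_mem_iff hcompl, ← mul_sub]
    rw [Nat.card_subtype_and_snd_eq (fun u : Kˣ => (u : K) * (x - x') ∈ V)
        fun u => α - A.projectionOnto V hcompl (u * x)]
    exact (Nat.card_subtype_units_mul_mem (S := V) V.zero_mem (sub_ne_zero.2 hxx')).trans <| by
      rw [SetLike.coe_sort_coe, cardV]

/-- With `X = F_{q^t}` (modelled as `K`), `A` a `(t−ℓ)`-dimensional and
`V` an `ℓ`-dimensional `F_q`-subspace with `A ∩ V = {0}`, and `S = K* × A`, the relation
`f((s₁,s₂), x) = α ⟺ s₁ x + s₂ ∈ α + V` is well-defined (each pair `(s, x)` determines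
a unique `α ∈ A`, so `f` is the functional form of a mosaic indexed by `A`), and for
every `α ∈ A` the blocks `{x : f(s, x) = α}`, `s ∈ S`, form a `(v, k, λ)`-BIBD on `K`
with parameters `v = q^t`, `b = q^{t−ℓ}(q^t − 1)`, `r = q^t − 1`, `k = q^ℓ`,
`λ = q^ℓ − 1`. -/
theorem bibd_mosaic_from_field {F K : Type*} [Field F] [Fintype F] [Field K] [Fintype K]
    [Algebra F K] (q t ℓ : ℕ)
    (hq : Fintype.card F = q) (ht : Module.finrank F K = t)
    (hℓ : 1 ≤ ℓ) (hℓt : ℓ < t)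
    (A V : Submodule F K)
    (hA : Module.finrank F A = t - ℓ) (hV : Module.finrank F V = ℓ)
    (hAV : A ⊓ V = ⊥) :
    -- the number of points is v = q^t
    (Nat.card K = q ^ t) ∧
    -- the number of blocks (block indices) is b = q^{t-ℓ}(q^t - 1)
    (Nat.card (Kˣ × A) = q ^ (t - ℓ) * (q ^ t - 1)) ∧
    -- f is well defined: a mosaic indexed by A
    (∀ (s : Kˣ × A) (x : K), ∃! α : A, (s.1 : K) * x + (s.2 : K) - (α : K) ∈ V) ∧
    -- every block has k = q^ℓ points
    (∀ (s : Kˣ × A) (α : A),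
      Nat.card {x : K // (s.1 : K) * x + (s.2 : K) - (α : K) ∈ V} = q ^ ℓ) ∧
    -- replication number r = q^t - 1 in each member of the mosaic
    (∀ (α : A) (x : K),
      Nat.card {s : Kˣ × A // (s.1 : K) * x + (s.2 : K) - (α : K) ∈ V} = q ^ t - 1) ∧
    -- any two distinct points lie in λ = q^ℓ - 1 common blocks of each member
    (∀ (α : A) (x x' : K), x ≠ x' →
      Nat.card {s : Kˣ × A //
          (s.1 : K) * x + (s.2 : K) - (α : K) ∈ V ∧
          (s.1 : K) * x' + (s.2 : K) - (α : K) ∈ V}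
        = q ^ ℓ - 1) :=
  bibd_mosaic_from_field_general q t ℓ hq ht hℓt A V hA hV hAV
end
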